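/- Let ρ be a density matrix on ℂ^d. Then the maximal fidelity of ρ with incoherent states equals the optimal von Neumann success probability: F(ρ) = sup over all orthonormal bases f_1,…,f_d of ℂ^d of Σ_{i=1}^d |⟨f_i, √ρ e_i⟩|². In particular, if all diagonal entries η_i = ρ_{ii} are positive, then the geometric coherence equals the minimum error probability of discriminating the associated discrimination ensemble of ρ using von Neumann measurements: C_g(ρ) = P_E^{vN}({|ψ_i⟩, η_i}_{i=1}^d). -/

import Mathlib

open scoped BigOperators ComplexOrder

noncomputable section
open scoped Classical
open Matrix

/-- Positive semidefinite square root of a matrix (junk value `0` if not PSD). -/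
noncomputable def msqrt {d : ℕ} (A : Matrix (Fin d) (Fin d) ℂ) : Matrix (Fin d) (Fin d) ℂ :=
  if h : A.PosSemidef then
    h.1.eigenvectorUnitary.1 * Matrix.diagonal (fun i => ((Real.sqrt (h.1.eigenvalues i) : ℝ) : ℂ)) *
      (star h.1.eigenvectorUnitary : Matrix (Fin d) (Fin d) ℂ)
  else 0

/-- A density matrix: positive semidefinite with trace one. -/
def IsDensityMatrix {d : ℕ} (ρ : Matrix (Fin d) (Fin d) ℂ) : Prop :=
  ρ.PosSemidef ∧ ρ.trace = 1

/-- An incoherent state: a density matrix diagonal in the standard basis. -/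
def IsIncoherent {d : ℕ} (σ : Matrix (Fin d) (Fin d) ℂ) : Prop :=
  IsDensityMatrix σ ∧ ∀ i j, i ≠ j → σ i j = 0

/-- Fidelity `F(ρ,σ) = (Tr √(√σ ρ √σ))²`. -/
noncomputable def fid {d : ℕ} (ρ σ : Matrix (Fin d) (Fin d) ℂ) : ℝ :=
  ((msqrt (msqrt σ * ρ * msqrt σ)).trace).re ^ 2

/-- Maximal fidelity with incoherent states. -/
noncomputable def maxFid {d : ℕ} (ρ : Matrix (Fin d) (Fin d) ℂ) : ℝ :=
  sSup {x : ℝ | ∃ σ, IsIncoherent σ ∧ x = fid ρ σ}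

/-- Geometric coherence `C_g(ρ) = 1 − F(ρ)`. -/
noncomputable def geomCoh {d : ℕ} (ρ : Matrix (Fin d) (Fin d) ℂ) : ℝ :=
  1 - maxFid ρ

/-- A POVM with `n` outcomes on a Hilbert space. -/
def IsPOVM {H : Type*} [NormedAddCommGroup H] [InnerProductSpace ℂ H] [CompleteSpace H]
    {n : ℕ} (M : Fin n → H →L[ℂ] H) : Prop :=
  (∀ i, (M i).IsPositive) ∧ (∑ i, M i) = 1

/-- Optimal success probability of ambiguous discrimination of the ensemble `{ψ i, η i}`. -/
noncomputable def optSuccess {H : Type*} [NormedAddCommGroup H] [InnerProductSpace ℂ H]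
    [CompleteSpace H] {n : ℕ} (ψ : Fin n → H) (η : Fin n → ℝ) : ℝ :=
  sSup {x : ℝ | ∃ M : Fin n → H →L[ℂ] H, IsPOVM M ∧
    x = ∑ i, η i * ((inner ℂ (ψ i) ((M i) (ψ i)) : ℂ)).re}

/-- Optimal von Neumann success probability (over orthonormal bases of `ℂ^d`). -/
noncomputable def vnSuccess {d : ℕ} (ψ : Fin d → EuclideanSpace ℂ (Fin d))
    (η : Fin d → ℝ) : ℝ :=
  sSup {x : ℝ | ∃ f : Fin d → EuclideanSpace ℂ (Fin d), Orthonormal ℂ f ∧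
    x = ∑ i, η i * ‖(inner ℂ (f i) (ψ i) : ℂ)‖ ^ 2}

/-- The column `√ρ e_i` of the square root of `ρ`, as a vector of `ℂ^d`. -/
noncomputable def sqrtCol {d : ℕ} (ρ : Matrix (Fin d) (Fin d) ℂ) (i : Fin d) :
    EuclideanSpace ℂ (Fin d) :=
  WithLp.toLp 2 (fun j => msqrt ρ j i)

/-- The state `|ψ_i⟩ = η_i^{-1/2} √ρ e_i` of the discrimination ensemble associated to `ρ`. -/
noncomputable def discVec {d : ℕ} (ρ : Matrix (Fin d) (Fin d) ℂ) (i : Fin d) :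
    EuclideanSpace ℂ (Fin d) :=
  ((Real.sqrt ((ρ i i).re) : ℂ))⁻¹ • sqrtCol ρ i

/-- The QSD-state of an ensemble: `ρ_{ij} = √(η_i η_j) ⟨ψ_i|ψ_j⟩`. -/
noncomputable def qsdState {H : Type*} [NormedAddCommGroup H] [InnerProductSpace ℂ H]
    {n : ℕ} (ψ : Fin n → H) (η : Fin n → ℝ) : Matrix (Fin n) (Fin n) ℂ :=
  fun i j => (Real.sqrt (η i * η j) : ℂ) * (inner ℂ (ψ i) (ψ j) : ℂ)


def colE {d : ℕ} (A : Matrix (Fin d) (Fin d) ℂ) (i : Fin d) : EuclideanSpace ℂ (Fin d) :=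
  WithLp.toLp 2 (fun j => A j i)

lemma msqrt_posSemidef' {d : ℕ} {A : Matrix (Fin d) (Fin d) ℂ} (hA : A.PosSemidef) :
    (msqrt A).PosSemidef := by
  rw [msqrt, dif_pos hA]
  have hD := (Matrix.posSemidef_diagonal_iff
    (d := fun i => ((Real.sqrt (hA.1.eigenvalues i) : ℝ) : ℂ))).mpr fun i => by
      simpa using Complex.zero_le_real.mpr (Real.sqrt_nonneg (hA.1.eigenvalues i))
  simpa [Matrix.star_eq_conjTranspose] using
    hD.mul_mul_conjTranspose_same (hA.1.eigenvectorUnitary : Matrix (Fin d) (Fin d) ℂ)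

lemma msqrt_mul_self' {d : ℕ} {A : Matrix (Fin d) (Fin d) ℂ} (hA : A.PosSemidef) :
    msqrt A * msqrt A = A := by
  rw [msqrt, dif_pos hA]
  have hU : star (hA.1.eigenvectorUnitary : Matrix (Fin d) (Fin d) ℂ) *
      (hA.1.eigenvectorUnitary : Matrix (Fin d) (Fin d) ℂ) = 1 :=
    Matrix.mem_unitaryGroup_iff'.mp hA.1.eigenvectorUnitary.2
  have hDD : Matrix.diagonal (fun i => ((Real.sqrt (hA.1.eigenvalues i) : ℝ) : ℂ)) *
      Matrix.diagonal (fun i => ((Real.sqrt (hA.1.eigenvalues i) : ℝ) : ℂ))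
      = Matrix.diagonal (RCLike.ofReal ∘ hA.1.eigenvalues) := by
    rw [Matrix.diagonal_mul_diagonal]
    congr 1
    funext i
    rw [← Complex.ofReal_mul, Real.mul_self_sqrt (hA.eigenvalues_nonneg i)]
    rfl
  conv_rhs => rw [hA.1.spectral_theorem, Unitary.conjStarAlgAut_apply]
  simp only [Matrix.mul_assoc]
  rw [← Matrix.mul_assoc (star _) _ (Matrix.diagonal _ * _), hU, Matrix.one_mul,
    ← Matrix.mul_assoc (Matrix.diagonal _) (Matrix.diagonal _), hDD]

open scoped MatrixOrder in
lemma msqrt_unique' {d : ℕ} {A B : Matrix (Fin d) (Fin d) ℂ} (hA : A.PosSemidef)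
    (hB : B.PosSemidef) (h : B ^ 2 = A) : msqrt A = B := by
  have h1 : CFC.sqrt A = msqrt A :=
    (CFC.sqrt_eq_iff A (msqrt A) hA.nonneg (msqrt_posSemidef' hA).nonneg).mpr (msqrt_mul_self' hA)
  have h2 : CFC.sqrt A = B :=
    (CFC.sqrt_eq_iff A B hA.nonneg hB.nonneg).mpr (by rw [← pow_two]; exact h)
  rw [← h1, h2]

lemma inner_colE {d : ℕ} (A B : Matrix (Fin d) (Fin d) ℂ) (i j : Fin d) :
    (inner ℂ (colE A i) (colE B j) : ℂ) = (Aᴴ * B) i j := by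
  simp [colE, PiLp.inner_apply, PiLp.toLp_apply, Matrix.mul_apply, Matrix.conjTranspose_apply, RCLike.inner_apply,
    mul_comm]

lemma orthonormal_colE_iff {d : ℕ} (A : Matrix (Fin d) (Fin d) ℂ) :
    Orthonormal ℂ (colE A) ↔ Aᴴ * A = 1 := by
  rw [orthonormal_iff_ite]
  constructor
  · intro h
    ext i j
    rw [← inner_colE, h i j]
    simp [Matrix.one_apply]
  · intro h i j
    rw [inner_colE, h]
    simp [Matrix.one_apply]

lemma norm_colE {d : ℕ} (x : EuclideanSpace ℂ (Fin d)) (r : ℝ)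
    (h : (inner ℂ x x : ℂ) = (r : ℂ)) : ‖x‖ = Real.sqrt r := by
  rw [inner_self_eq_norm_sq_to_K] at h
  have h3 := h.symm
  rw [← RCLike.ofReal_pow] at h3
  rw [RCLike.ofReal_inj.mp h3, Real.sqrt_sq (norm_nonneg _)]

lemma traceNorm_spec {d : ℕ} (M : Matrix (Fin d) (Fin d) ℂ) :
    ∃ t : ℝ, (msqrt (Mᴴ * M)).trace = (t : ℂ) ∧ 0 ≤ t ∧
      (∃ W : Matrix (Fin d) (Fin d) ℂ, W * Wᴴ = 1 ∧ Wᴴ * W = 1 ∧ (W * M).trace = (t : ℂ)) ∧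
      (∀ W : Matrix (Fin d) (Fin d) ℂ, Wᴴ * W = 1 → ((W * M).trace).re ≤ t) := by
  have hH : (Mᴴ * M).PosSemidef := Matrix.posSemidef_conjTranspose_mul_self M
  set lam := hH.1.eigenvalues with hlam
  have hlam0 : ∀ i, 0 ≤ lam i := fun i => hH.eigenvalues_nonneg i
  set V : Matrix (Fin d) (Fin d) ℂ := (hH.1.eigenvectorUnitary : Matrix (Fin d) (Fin d) ℂ)
    with hVdef
  have hV1 : Vᴴ * V = 1 := by
    have := hH.1.eigenvectorUnitary.2
    rw [Matrix.mem_unitaryGroup_iff'] at this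
    simpa [Matrix.star_eq_conjTranspose] using this
  have hV2 : V * Vᴴ = 1 := mul_eq_one_comm.mp hV1
  have hst' : Mᴴ * M = V * Matrix.diagonal (Complex.ofReal ∘ lam) * Vᴴ := by
    simpa [Matrix.star_eq_conjTranspose, hVdef] using hH.1.spectral_theorem
  have hdiag : (M * V)ᴴ * (M * V) = Matrix.diagonal (Complex.ofReal ∘ lam) := by
    calc (M * V)ᴴ * (M * V) = Vᴴ * (Mᴴ * M) * V := by
          rw [Matrix.conjTranspose_mul]; simp only [Matrix.mul_assoc]
      _ = (Vᴴ * V) * Matrix.diagonal (Complex.ofReal ∘ lam) * (Vᴴ * V) := by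
          rw [hst']; simp only [Matrix.mul_assoc]
      _ = Matrix.diagonal (Complex.ofReal ∘ lam) := by rw [hV1]; simp
  have hinner : ∀ i j, (inner ℂ (colE (M * V) i) (colE (M * V) j) : ℂ)
      = if i = j then (lam i : ℂ) else 0 := by
    intro i j
    rw [inner_colE, hdiag]
    by_cases h : i = j <;> simp [Matrix.diagonal_apply, h]
  have hnorm : ∀ i, ‖colE (M * V) i‖ = Real.sqrt (lam i) := fun i =>
    norm_colE _ _ (by rw [hinner]; simp)
  refine ⟨∑ i, Real.sqrt (lam i), ?_, ?_, ?_, ?_⟩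
  · -- trace of sqrt
    have h1 : msqrt (Mᴴ * M) = _ := dif_pos hH
    rw [h1, Matrix.trace_mul_cycle]
    rw [show star (hH.1.eigenvectorUnitary : Matrix (Fin d) (Fin d) ℂ) *
        (hH.1.eigenvectorUnitary : Matrix (Fin d) (Fin d) ℂ) = 1 from hV1, one_mul,
      Matrix.trace_diagonal]
    push_cast
    rfl
  · exact Finset.sum_nonneg fun i _ => Real.sqrt_nonneg _
  · -- existence of an optimal unitary
    have hmzero : ∀ i, lam i = 0 → colE (M * V) i = 0 := by
      intro i h
      have h2 := hnorm i
      rw [h, Real.sqrt_zero] at h2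
      exact norm_eq_zero.mp h2
    set s : Set (Fin d) := {i | lam i ≠ 0} with hsdef
    set u : Fin d → EuclideanSpace ℂ (Fin d) :=
      fun i => (((Real.sqrt (lam i) : ℝ) : ℂ))⁻¹ • colE (M * V) i with hu
    have hsq : ∀ i, ((Real.sqrt (lam i) : ℝ) : ℂ) * ((Real.sqrt (lam i) : ℝ) : ℂ)
        = (lam i : ℂ) := by
      intro i
      rw [← Complex.ofReal_mul, Real.mul_self_sqrt (hlam0 i)]
    have huon : Orthonormal ℂ (s.restrict u) := by
      rw [orthonormal_iff_ite]
      rintro ⟨i, hi⟩ ⟨j, hj⟩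
      simp only [Set.restrict_apply, Set.restrict, hu]
      rw [inner_smul_left, inner_smul_right, hinner]
      by_cases h : i = j
      · subst h
        have hne : ((Real.sqrt (lam i) : ℝ) : ℂ) ≠ 0 := by
          simp only [ne_eq, Complex.ofReal_eq_zero]
          exact Real.sqrt_ne_zero'.mpr ((hlam0 i).lt_of_ne (Ne.symm hi))
        simp only [if_pos rfl, map_inv₀, Complex.conj_ofReal]
        rw [← hsq i]
        field_simp
        simp
      · have h' : (⟨i, hi⟩ : s) ≠ ⟨j, hj⟩ := by simpa using h
        rw [if_neg h, if_neg h']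
        ring
    have hcard : Module.finrank ℂ (EuclideanSpace ℂ (Fin d)) = Fintype.card (Fin d) := by
      simp
    obtain ⟨b, hb⟩ := huon.exists_orthonormalBasis_extension_of_card_eq hcard
    set B : Matrix (Fin d) (Fin d) ℂ := Matrix.of fun j i => b i j with hBdef
    have hcolB : ∀ i, colE B i = b i := fun i => PiLp.ext fun j => rfl
    have hB1 : Bᴴ * B = 1 := by
      rw [← orthonormal_colE_iff]
      have : colE B = fun i => b i := funext hcolB
      rw [this]
      exact b.orthonormal
    have hB2 : B * Bᴴ = 1 := mul_eq_one_comm.mp hB1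
    refine ⟨V * Bᴴ, ?_, ?_, ?_⟩
    · rw [Matrix.conjTranspose_mul, Matrix.conjTranspose_conjTranspose]
      calc V * Bᴴ * (B * Vᴴ) = V * (Bᴴ * B) * Vᴴ := by simp only [Matrix.mul_assoc]
        _ = 1 := by rw [hB1, mul_one, hV2]
    · rw [Matrix.conjTranspose_mul, Matrix.conjTranspose_conjTranspose]
      calc B * Vᴴ * (V * Bᴴ) = B * (Vᴴ * V) * Bᴴ := by simp only [Matrix.mul_assoc]
        _ = 1 := by rw [hV1, mul_one, hB2]
    · have htr : (V * Bᴴ * M).trace = (Bᴴ * (M * V)).trace := by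
        rw [Matrix.mul_assoc, Matrix.trace_mul_comm, Matrix.mul_assoc]
      rw [htr]
      have hterm : ∀ i, (Bᴴ * (M * V)) i i = ((Real.sqrt (lam i) : ℝ) : ℂ) := by
        intro i
        rw [← inner_colE, hcolB]
        by_cases h : lam i = 0
        · rw [hmzero i h]
          simp [h]
        · have hi : i ∈ s := h
          have hbu : (b i : EuclideanSpace ℂ (Fin d)) = u i := hb i hi
          have hne : ((Real.sqrt (lam i) : ℝ) : ℂ) ≠ 0 := by
            simp only [ne_eq, Complex.ofReal_eq_zero]
            exact Real.sqrt_ne_zero'.mpr ((hlam0 i).lt_of_ne (Ne.symm h))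
          have hmi : colE (M * V) i = ((Real.sqrt (lam i) : ℝ) : ℂ) • u i := by
            rw [hu]
            simp only [smul_smul]
            rw [mul_inv_cancel₀ hne, one_smul]
          rw [hmi, inner_smul_right, hbu]
          have hnorm1 : (inner ℂ (u i) (u i) : ℂ) = 1 := by
            have := huon.1 ⟨i, hi⟩
            rw [show ((inner ℂ (u i) (u i) : ℂ)) = ((‖Set.restrict s u ⟨i, hi⟩‖ : ℝ) : ℂ) ^ 2 from
              inner_self_eq_norm_sq_to_K _]
            rw [this]
            norm_num
          rw [hnorm1, mul_one]
      rw [Matrix.trace]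
      simp only [Matrix.diag_apply, hterm]
      push_cast
      rfl
  · -- upper bound
    intro W hW
    have htr : (W * M).trace = (Vᴴ * (W * (M * V))).trace := by
      rw [show (Vᴴ * (W * (M * V))).trace = (W * (M * V) * Vᴴ).trace from
        Matrix.trace_mul_comm _ _]
      calc (W * M).trace = (W * M * (V * Vᴴ)).trace := by rw [hV2, mul_one]
        _ = (W * (M * V) * Vᴴ).trace := by simp only [Matrix.mul_assoc]
    have hwnorm : ∀ i, ‖colE (W * (M * V)) i‖ = Real.sqrt (lam i) := by
      intro i
      refine norm_colE _ _ ?_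
      rw [inner_colE]
      have : (W * (M * V))ᴴ * (W * (M * V)) = (M * V)ᴴ * (M * V) := by
        rw [Matrix.conjTranspose_mul]
        calc (M * V)ᴴ * Wᴴ * (W * (M * V)) = (M * V)ᴴ * (Wᴴ * W) * (M * V) := by
              simp only [Matrix.mul_assoc]
          _ = (M * V)ᴴ * (M * V) := by rw [hW, mul_one]
      rw [this, hdiag]
      simp [Matrix.diagonal_apply]
    have hvnorm : ∀ i, ‖colE V i‖ = 1 := by
      intro i
      have := norm_colE (colE V i) 1 (by rw [inner_colE, hV1]; simp [Matrix.one_apply])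
      simpa using this
    rw [htr, Matrix.trace]
    simp only [Matrix.diag_apply]
    rw [Complex.re_sum]
    refine Finset.sum_le_sum fun i _ => ?_
    have h1 : (Vᴴ * (W * (M * V))) i i = (inner ℂ (colE V i) (colE (W * (M * V)) i) : ℂ) :=
      (inner_colE _ _ i i).symm
    rw [h1]
    calc (inner ℂ (colE V i) (colE (W * (M * V)) i) : ℂ).re
        ≤ ‖(inner ℂ (colE V i) (colE (W * (M * V)) i) : ℂ)‖ := Complex.re_le_norm _
      _ ≤ ‖colE V i‖ * ‖colE (W * (M * V)) i‖ := norm_inner_le_norm _ _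
      _ = Real.sqrt (lam i) := by rw [hvnorm, hwnorm, one_mul]

lemma msqrt_diagonal {d : ℕ} (q : Fin d → ℝ) (hq : ∀ i, 0 ≤ q i) :
    msqrt (Matrix.diagonal (fun i => (q i : ℂ)))
      = Matrix.diagonal (fun i => ((Real.sqrt (q i) : ℝ) : ℂ)) := by
  have hD : (Matrix.diagonal (fun i => (q i : ℂ))).PosSemidef :=
    Matrix.posSemidef_diagonal_iff.mpr fun i => by
      simpa using Complex.zero_le_real.mpr (hq i)
  have hR : (Matrix.diagonal (fun i => ((Real.sqrt (q i) : ℝ) : ℂ))).PosSemidef :=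
    Matrix.posSemidef_diagonal_iff.mpr fun i => by
      simpa using Complex.zero_le_real.mpr (Real.sqrt_nonneg (q i))
  have hsq : (Matrix.diagonal (fun i => ((Real.sqrt (q i) : ℝ) : ℂ))) ^ 2
      = Matrix.diagonal (fun i => (q i : ℂ)) := by
    rw [pow_two, Matrix.diagonal_mul_diagonal]
    exact congrArg Matrix.diagonal (funext fun i => by
      rw [← Complex.ofReal_mul, Real.mul_self_sqrt (hq i)])
  exact msqrt_unique' hD hR hsq


lemma mk_incoherent {d : ℕ} (q : Fin d → ℝ) (h0 : ∀ i, 0 ≤ q i) (h1 : ∑ i, q i = 1) :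
    IsIncoherent (Matrix.diagonal (fun i => (q i : ℂ))) := by
  refine ⟨⟨Matrix.posSemidef_diagonal_iff.mpr fun i => by
      simpa using Complex.zero_le_real.mpr (h0 i), ?_⟩, fun i j hij =>
      Matrix.diagonal_apply_ne _ hij⟩
  rw [Matrix.trace_diagonal]
  push_cast
  exact_mod_cast congrArg (Complex.ofReal) h1

/-- An incoherent state is the diagonal matrix of its (real, nonneg) diagonal. -/
lemma incoherent_eq_diagonal {d : ℕ} {σ : Matrix (Fin d) (Fin d) ℂ} (hσ : IsIncoherent σ) :
    σ = Matrix.diagonal (fun i => (((σ i i).re : ℝ) : ℂ))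
      ∧ (∀ i, 0 ≤ (σ i i).re) ∧ (∑ i, (σ i i).re) = 1 := by
  have hdiag : ∀ i, 0 ≤ σ i i := by
    intro i
    exact hσ.1.1.diag_nonneg
  have hre : ∀ i, σ i i = ((σ i i).re : ℂ) := by
    intro i
    have h := hdiag i
    rw [Complex.le_def] at h
    exact Complex.ext rfl (by simpa using h.2.symm)
  refine ⟨?_, fun i => ?_, ?_⟩
  · ext i j
    by_cases h : i = j
    · subst h; rw [Matrix.diagonal_apply_eq]; exact hre i
    · rw [Matrix.diagonal_apply_ne _ h]; exact hσ.2 i j h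
  · have h := hdiag i
    rw [Complex.le_def] at h
    simpa using h.1
  · have := hσ.1.2
    rw [Matrix.trace] at this
    have h2 := congrArg Complex.re this
    rw [Complex.re_sum] at h2
    simpa [Matrix.diag_apply] using h2


lemma claimA {d : ℕ} (ρ σ : Matrix (Fin d) (Fin d) ℂ) (hρ : IsDensityMatrix ρ)
    (hσ : IsIncoherent σ) :
    ∃ f : Fin d → EuclideanSpace ℂ (Fin d), Orthonormal ℂ f ∧
      fid ρ σ ≤ ∑ i, ‖(inner ℂ (f i) (sqrtCol ρ i) : ℂ)‖ ^ 2 := by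
  obtain ⟨hσdiag, hq0, hq1⟩ := incoherent_eq_diagonal hσ
  set q : Fin d → ℝ := fun i => (σ i i).re with hqdef
  set S := msqrt ρ with hSdef
  have hSps : S.PosSemidef := msqrt_posSemidef' hρ.1
  have hSh : Sᴴ = S := hSps.1
  have hSS : S * S = ρ := msqrt_mul_self' hρ.1
  set R := Matrix.diagonal (fun i => ((Real.sqrt (q i) : ℝ) : ℂ)) with hRdef
  have hmsσ : msqrt σ = R := by
    conv_lhs => rw [hσdiag]
    exact msqrt_diagonal q hq0
  have hRps : R.PosSemidef := Matrix.posSemidef_diagonal_iff.mpr fun i => by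
    simpa using Complex.zero_le_real.mpr (Real.sqrt_nonneg (q i))
  have hRh : Rᴴ = R := hRps.1
  set M := S * R with hM
  have hMM : Mᴴ * M = msqrt σ * ρ * msqrt σ := by
    rw [hM, Matrix.conjTranspose_mul, hRh, hSh, hmsσ]
    calc R * S * (S * R) = R * (S * S) * R := by simp only [Matrix.mul_assoc]
      _ = R * ρ * R := by rw [hSS]
  obtain ⟨t, htr, ht0, ⟨W, hW1, hW2, hWt⟩, hub⟩ := traceNorm_spec M
  have hfid : fid ρ σ = t ^ 2 := by
    rw [fid, ← hMM, htr]
    simp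
  refine ⟨colE Wᴴ, (orthonormal_colE_iff Wᴴ).mpr
    (by rwa [Matrix.conjTranspose_conjTranspose]), ?_⟩
  have hcolM : ∀ i, colE M i = ((Real.sqrt (q i) : ℝ) : ℂ) • sqrtCol ρ i := by
    intro i
    refine PiLp.ext fun j => ?_
    show (S * R) j i = ((Real.sqrt (q i) : ℝ) : ℂ) * msqrt ρ j i
    rw [hRdef, Matrix.mul_diagonal, mul_comm]
  have htsum : (t : ℂ)
      = ∑ i, ((Real.sqrt (q i) : ℝ) : ℂ) * (inner ℂ (colE Wᴴ i) (sqrtCol ρ i) : ℂ) := by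
    rw [← hWt, Matrix.trace]
    refine Finset.sum_congr rfl fun i _ => ?_
    have h1 : (W * M) i i = ((Wᴴ)ᴴ * M) i i := by rw [Matrix.conjTranspose_conjTranspose]
    rw [Matrix.diag_apply, h1, ← inner_colE, hcolM, inner_smul_right]
  have hre : t = ∑ i, Real.sqrt (q i) * ((inner ℂ (colE Wᴴ i) (sqrtCol ρ i) : ℂ)).re := by
    have h2 := congrArg Complex.re htsum
    rw [Complex.ofReal_re, Complex.re_sum] at h2
    simpa [Complex.re_ofReal_mul] using h2
  have hle : t ≤ ∑ i, Real.sqrt (q i) * ‖(inner ℂ (colE Wᴴ i) (sqrtCol ρ i) : ℂ)‖ := by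
    rw [hre]
    refine Finset.sum_le_sum fun i _ => ?_
    exact mul_le_mul_of_nonneg_left
      ((Complex.re_le_norm _).trans_eq rfl) (Real.sqrt_nonneg _)
  have hcs := Finset.sum_mul_sq_le_sq_mul_sq Finset.univ (fun i => Real.sqrt (q i))
    (fun i => ‖(inner ℂ (colE Wᴴ i) (sqrtCol ρ i) : ℂ)‖)
  have hq2 : ∑ i, (Real.sqrt (q i)) ^ 2 = 1 := by
    rw [← hq1]
    exact Finset.sum_congr rfl fun i _ => Real.sq_sqrt (hq0 i)
  calc fid ρ σ = t ^ 2 := hfid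
    _ ≤ (∑ i, Real.sqrt (q i) * ‖(inner ℂ (colE Wᴴ i) (sqrtCol ρ i) : ℂ)‖) ^ 2 :=
        pow_le_pow_left₀ ht0 hle 2
    _ ≤ (∑ i, (Real.sqrt (q i)) ^ 2)
        * (∑ i, ‖(inner ℂ (colE Wᴴ i) (sqrtCol ρ i) : ℂ)‖ ^ 2) := hcs
    _ = ∑ i, ‖(inner ℂ (colE Wᴴ i) (sqrtCol ρ i) : ℂ)‖ ^ 2 := by rw [hq2, one_mul]

lemma claimB {d : ℕ} (ρ : Matrix (Fin d) (Fin d) ℂ) (hρ : IsDensityMatrix ρ) (hd : 0 < d)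
    (f : Fin d → EuclideanSpace ℂ (Fin d)) (hf : Orthonormal ℂ f) :
    ∃ σ, IsIncoherent σ ∧ ∑ i, ‖(inner ℂ (f i) (sqrtCol ρ i) : ℂ)‖ ^ 2 ≤ fid ρ σ := by
  have hd' : (0 : ℝ) < d := by exact_mod_cast hd
  set a : Fin d → ℝ := fun i => ‖(inner ℂ (f i) (sqrtCol ρ i) : ℂ)‖ with ha
  set A : ℝ := ∑ i, a i ^ 2 with hA
  have hA0 : 0 ≤ A := Finset.sum_nonneg fun i _ => sq_nonneg _
  by_cases hAz : A = 0
  · refine ⟨Matrix.diagonal (fun _ => (((d : ℝ)⁻¹ : ℝ) : ℂ)),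
      mk_incoherent _ (fun _ => by positivity) (by
        rw [Finset.sum_const, Finset.card_univ, Fintype.card_fin, nsmul_eq_mul]
        field_simp), ?_⟩
    rw [hAz]
    unfold fid
    exact sq_nonneg _
  · have hApos : 0 < A := lt_of_le_of_ne hA0 (Ne.symm hAz)
    set q : Fin d → ℝ := fun i => a i ^ 2 / A with hq
    have hq0 : ∀ i, 0 ≤ q i := fun i => div_nonneg (sq_nonneg _) hA0
    have hq1 : ∑ i, q i = 1 := by
      rw [hq, ← Finset.sum_div, ← hA, div_self hAz]
    refine ⟨Matrix.diagonal (fun i => (q i : ℂ)), mk_incoherent q hq0 hq1, ?_⟩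
    set S := msqrt ρ with hSdef
    have hSps : S.PosSemidef := msqrt_posSemidef' hρ.1
    have hSh : Sᴴ = S := hSps.1
    have hSS : S * S = ρ := msqrt_mul_self' hρ.1
    set R := Matrix.diagonal (fun i => ((Real.sqrt (q i) : ℝ) : ℂ)) with hRdef
    have hmsσ : msqrt (Matrix.diagonal (fun i => (q i : ℂ))) = R := msqrt_diagonal q hq0
    have hRps : R.PosSemidef := Matrix.posSemidef_diagonal_iff.mpr fun i => by
      simpa using Complex.zero_le_real.mpr (Real.sqrt_nonneg (q i))
    have hRh : Rᴴ = R := hRps.1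
    set M := S * R with hM
    have hMM : Mᴴ * M = msqrt (Matrix.diagonal (fun i => (q i : ℂ))) * ρ
        * msqrt (Matrix.diagonal (fun i => (q i : ℂ))) := by
      rw [hM, Matrix.conjTranspose_mul, hRh, hSh, hmsσ]
      calc R * S * (S * R) = R * (S * S) * R := by simp only [Matrix.mul_assoc]
        _ = R * ρ * R := by rw [hSS]
    obtain ⟨t, htr, ht0, hex, hub⟩ := traceNorm_spec M
    have hfid : fid ρ (Matrix.diagonal (fun i => (q i : ℂ))) = t ^ 2 := by
      rw [fid, ← hMM, htr]
      simp
    set z : Fin d → ℂ := fun i => (inner ℂ (f i) (sqrtCol ρ i) : ℂ) with hz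
    set c : Fin d → ℂ := fun i => if z i = 0 then 1 else z i / ((a i : ℝ) : ℂ) with hc
    have haz : ∀ i, z i ≠ 0 → (a i : ℝ) ≠ 0 := by
      intro i h
      simp only [ha, ne_eq, norm_eq_zero]
      exact h
    have hcc : ∀ i, (starRingEnd ℂ) (c i) * c i = 1 := by
      intro i
      rw [hc]
      by_cases h : z i = 0
      · simp [h]
      · have hane : ((a i : ℝ) : ℂ) ≠ 0 := by
          simpa using haz i h
        simp only [if_neg h]
        rw [map_div₀, Complex.conj_ofReal, div_mul_div_comm,
          ← Complex.normSq_eq_conj_mul_self]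
        have h1 : Complex.normSq (z i) = (a i) ^ 2 := by
          rw [Complex.normSq_eq_norm_sq]
        rw [h1]
        push_cast
        field_simp
    have hgz : ∀ i, (starRingEnd ℂ) (c i) * z i = ((a i : ℝ) : ℂ) := by
      intro i
      rw [hc]
      by_cases h : z i = 0
      · simp only [if_pos h, _root_.map_one, one_mul, h]
        rw [show a i = ‖z i‖ from rfl, h]
        simp
      · simp only [if_neg h]
        rw [map_div₀, Complex.conj_ofReal, div_mul_eq_mul_div,
          ← Complex.normSq_eq_conj_mul_self]
        have h1 : Complex.normSq (z i) = (a i) ^ 2 := by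
          rw [Complex.normSq_eq_norm_sq]
        rw [h1]
        have hane : ((a i : ℝ) : ℂ) ≠ 0 := by simpa using haz i h
        rw [show ((a i ^ 2 : ℝ) : ℂ) = ((a i : ℝ) : ℂ) * ((a i : ℝ) : ℂ) by push_cast; ring,
          mul_div_assoc, div_self hane, mul_one]
    set g : Fin d → EuclideanSpace ℂ (Fin d) := fun i => c i • f i with hg
    have hg_on : Orthonormal ℂ g := by
      rw [orthonormal_iff_ite]
      intro i j
      rw [hg]
      simp only
      rw [inner_smul_left, inner_smul_right, orthonormal_iff_ite.mp hf i j]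
      by_cases h : i = j
      · subst h
        simp only [if_pos rfl, if_true, mul_one]
        exact hcc i
      · simp [if_neg h]
    have hg_inner : ∀ i, (inner ℂ (g i) (sqrtCol ρ i) : ℂ) = ((a i : ℝ) : ℂ) := by
      intro i
      rw [hg]
      simp only
      rw [inner_smul_left]
      exact hgz i
    -- build the unitary
    set B : Matrix (Fin d) (Fin d) ℂ := Matrix.of (fun j i => g i j) with hBdef
    have hcolB : colE B = g := funext fun i => PiLp.ext fun j => rfl
    have hB1 : Bᴴ * B = 1 := by
      rw [← orthonormal_colE_iff, hcolB]
      exact hg_on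
    have hB2 : B * Bᴴ = 1 := mul_eq_one_comm.mp hB1
    have hWu : (Bᴴ)ᴴ * Bᴴ = 1 := by rw [Matrix.conjTranspose_conjTranspose, hB2]
    have hub' := hub Bᴴ hWu
    -- compute the trace
    have hcolM : ∀ i, colE M i = ((Real.sqrt (q i) : ℝ) : ℂ) • sqrtCol ρ i := by
      intro i
      refine PiLp.ext fun j => ?_
      show (S * R) j i = ((Real.sqrt (q i) : ℝ) : ℂ) * msqrt ρ j i
      rw [hRdef, Matrix.mul_diagonal, mul_comm]
    have htrace : (Bᴴ * M).trace = ∑ i, ((Real.sqrt (q i) * a i : ℝ) : ℂ) := by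
      rw [Matrix.trace]
      refine Finset.sum_congr rfl fun i _ => ?_
      rw [Matrix.diag_apply, ← inner_colE, hcolM, inner_smul_right, hcolB, hg_inner,
        Complex.ofReal_mul]
    have hsum : ∑ i, Real.sqrt (q i) * a i = Real.sqrt A := by
      have hstep : ∀ i, Real.sqrt (q i) * a i = a i ^ 2 / Real.sqrt A := by
        intro i
        rw [hq]
        simp only
        rw [Real.sqrt_div (sq_nonneg (a i)), Real.sqrt_sq (norm_nonneg _),
          div_mul_eq_mul_div, pow_two]
      rw [Finset.sum_congr rfl fun i _ => hstep i, ← Finset.sum_div, ← hA,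
        Real.div_sqrt]
    have hre : (Bᴴ * M).trace.re = Real.sqrt A := by
      rw [htrace, Complex.re_sum]
      rw [← hsum]
      exact Finset.sum_congr rfl fun i _ => by simp
    rw [hfid]
    have hsa : Real.sqrt A ≤ t := by rw [← hre]; exact hub'
    calc ∑ i, ‖(inner ℂ (f i) (sqrtCol ρ i) : ℂ)‖ ^ 2 = A := rfl
      _ = Real.sqrt A ^ 2 := by rw [Real.sq_sqrt hA0]
      _ ≤ t ^ 2 := pow_le_pow_left₀ (Real.sqrt_nonneg _) hsa 2

/-- Theorem 1 (first part): the maximal fidelity with incoherent states equals the optimal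
von Neumann success probability, and (for positive diagonal) the geometric coherence equals
the minimum error probability of discriminating the associated ensemble with von Neumann
measurements. -/
theorem maxFid_eq_vnSuccess {d : ℕ} (ρ : Matrix (Fin d) (Fin d) ℂ)
    (hρ : IsDensityMatrix ρ) :
    maxFid ρ = sSup {x : ℝ | ∃ f : Fin d → EuclideanSpace ℂ (Fin d), Orthonormal ℂ f ∧
        x = ∑ i, ‖(inner ℂ (f i) (sqrtCol ρ i) : ℂ)‖ ^ 2} ∧
    ((∀ i, 0 < (ρ i i).re) →
      geomCoh ρ = 1 - vnSuccess (discVec ρ) (fun i => (ρ i i).re)) := by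
  have hd : 0 < d := by
    rcases Nat.eq_zero_or_pos d with h | h
    · subst h
      have := hρ.2
      rw [Matrix.trace] at this
      simp at this
    · exact h
  have hd' : (0 : ℝ) < d := by exact_mod_cast hd
  -- basic facts about the square root of ρ
  have hSps : (msqrt ρ).PosSemidef := by
    exact msqrt_posSemidef' hρ.1
  have hSh : (msqrt ρ)ᴴ = msqrt ρ := hSps.1
  have hSS : msqrt ρ * msqrt ρ = ρ := by
    exact msqrt_mul_self' hρ.1
  have hdiagρ : ∀ i, 0 ≤ (ρ i i).re ∧ ρ i i = (((ρ i i).re : ℝ) : ℂ) := by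
    intro i
    have h2 : 0 ≤ ρ i i := hρ.1.diag_nonneg
    rw [Complex.le_def] at h2
    exact ⟨by simpa using h2.1, Complex.ext rfl (by simpa using h2.2.symm)⟩
  have hscol : ∀ i, (inner ℂ (sqrtCol ρ i) (sqrtCol ρ i) : ℂ) = ρ i i := by
    intro i
    rw [show sqrtCol ρ i = colE (msqrt ρ) i from rfl, inner_colE, hSh, hSS]
  have hnorms : ∀ i, ‖sqrtCol ρ i‖ ^ 2 = (ρ i i).re := by
    intro i
    have h := norm_colE (sqrtCol ρ i) ((ρ i i).re) (by rw [hscol]; exact (hdiagρ i).2)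
    rw [h, Real.sq_sqrt (hdiagρ i).1]
  have htrre : ∑ i, (ρ i i).re = 1 := by
    have := hρ.2
    rw [Matrix.trace] at this
    have h2 := congrArg Complex.re this
    rw [Complex.re_sum] at h2
    simpa [Matrix.diag_apply] using h2
  have hGbound : ∀ f : Fin d → EuclideanSpace ℂ (Fin d), Orthonormal ℂ f →
      ∑ i, ‖(inner ℂ (f i) (sqrtCol ρ i) : ℂ)‖ ^ 2 ≤ 1 := by
    intro f hf
    rw [← htrre]
    refine Finset.sum_le_sum fun i _ => ?_
    rw [← hnorms i]
    have h1 : ‖(inner ℂ (f i) (sqrtCol ρ i) : ℂ)‖ ≤ ‖sqrtCol ρ i‖ := by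
      have h2 := norm_inner_le_norm (𝕜 := ℂ) (f i) (sqrtCol ρ i)
      rwa [hf.1 i, one_mul] at h2
    exact pow_le_pow_left₀ (norm_nonneg _) h1 2
  -- the two sets
  set setG := {x : ℝ | ∃ f : Fin d → EuclideanSpace ℂ (Fin d), Orthonormal ℂ f ∧
    x = ∑ i, ‖(inner ℂ (f i) (sqrtCol ρ i) : ℂ)‖ ^ 2} with hsetG
  set setF := {x : ℝ | ∃ σ, IsIncoherent σ ∧ x = fid ρ σ} with hsetF
  have hbf : Orthonormal ℂ (⇑(EuclideanSpace.basisFun (Fin d) ℂ)) :=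
    (EuclideanSpace.basisFun (Fin d) ℂ).orthonormal
  have hGmem : (∑ i, ‖(inner ℂ ((EuclideanSpace.basisFun (Fin d) ℂ) i) (sqrtCol ρ i) : ℂ)‖ ^ 2)
      ∈ setG := ⟨_, hbf, rfl⟩
  have hGbdd : BddAbove setG := by
    refine ⟨1, fun x hx => ?_⟩
    obtain ⟨f, hf, rfl⟩ := hx
    exact hGbound f hf
  have hG0 : 0 ≤ sSup setG :=
    le_trans (Finset.sum_nonneg fun i _ => sq_nonneg _) (le_csSup hGbdd hGmem)
  have hσu : IsIncoherent (Matrix.diagonal (fun _ : Fin d => (((d : ℝ)⁻¹ : ℝ) : ℂ))) :=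
    mk_incoherent _ (fun _ => by positivity) (by
      rw [Finset.sum_const, Finset.card_univ, Fintype.card_fin, nsmul_eq_mul]
      field_simp)
  have hFmem : fid ρ (Matrix.diagonal (fun _ : Fin d => (((d : ℝ)⁻¹ : ℝ) : ℂ))) ∈ setF :=
    ⟨_, hσu, rfl⟩
  have hFbdd : BddAbove setF := by
    refine ⟨1, fun x hx => ?_⟩
    obtain ⟨σ, hσ, rfl⟩ := hx
    obtain ⟨f, hf, hle⟩ := claimA ρ σ hρ hσ
    exact hle.trans (hGbound f hf)
  have hF0 : 0 ≤ sSup setF := by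
    refine le_trans ?_ (le_csSup hFbdd hFmem)
    unfold fid
    exact sq_nonneg _
  have h1 : maxFid ρ = sSup setG := by
    rw [maxFid, ← hsetF]
    refine le_antisymm ?_ ?_
    · refine Real.sSup_le (fun x hx => ?_) hG0
      obtain ⟨σ, hσ, rfl⟩ := hx
      obtain ⟨f, hf, hle⟩ := claimA ρ σ hρ hσ
      exact hle.trans (le_csSup hGbdd ⟨f, hf, rfl⟩)
    · refine Real.sSup_le (fun x hx => ?_) hF0
      obtain ⟨f, hf, rfl⟩ := hx
      obtain ⟨σ, hσ, hle⟩ := claimB ρ hρ hd f hf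
      exact hle.trans (le_csSup hFbdd ⟨σ, hσ, rfl⟩)
  refine ⟨h1, fun hpos => ?_⟩
  have hterm : ∀ (f : Fin d → EuclideanSpace ℂ (Fin d)) i,
      (ρ i i).re * ‖(inner ℂ (f i) (discVec ρ i) : ℂ)‖ ^ 2
        = ‖(inner ℂ (f i) (sqrtCol ρ i) : ℂ)‖ ^ 2 := by
    intro f i
    have hη : 0 < (ρ i i).re := hpos i
    rw [discVec, inner_smul_right, norm_mul, mul_pow, norm_inv, Complex.norm_real,
      Real.norm_eq_abs, abs_of_nonneg (Real.sqrt_nonneg _), inv_pow,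
      Real.sq_sqrt hη.le, ← mul_assoc, mul_inv_cancel₀ hη.ne', one_mul]
  have hseteq : {x : ℝ | ∃ f : Fin d → EuclideanSpace ℂ (Fin d), Orthonormal ℂ f ∧
      x = ∑ i, (fun i => (ρ i i).re) i * ‖(inner ℂ (f i) (discVec ρ i) : ℂ)‖ ^ 2} = setG := by
    ext x
    constructor
    · rintro ⟨f, hf, rfl⟩
      exact ⟨f, hf, by simp only [hterm f]⟩
    · rintro ⟨f, hf, rfl⟩
      exact ⟨f, hf, by simp only [hterm f]⟩
  rw [geomCoh, vnSuccess, hseteq, h1]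

end
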